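/- arXiv:0805.2276 — 2 statements merged into one kernel-verified Lean document; each statement's English description precedes it below -/
import Mathlib

section
/- Double robustness, part 1 (correct outcome model): If δ ∈ {0,1}, G(Ỹ) is integrable, 𝓕(X̃,Z̃) = E[G(Ỹ) | X̃,Z̃], and π̃(X̃,Z̃) is any measurable function with values in (0,1] (possibly misspecified), and if δ is conditionally independent of Ỹ given (X̃,Z̃), then E[ (δ/π̃) (G(Ỹ) - 𝓕(X̃,Z̃)) ] = 0, and hence E[ (δ/π̃) G(Ỹ) + (1 - δ/π̃) 𝓕(X̃,Z̃) ] = E[G(Ỹ)]. -/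
open MeasureTheory ProbabilityTheory

/-!
Conditionally on `(X̃, Z̃)` the weight `1/π̃(X̃, Z̃)` is a constant and `δ` is independent of
`G(Ỹ)`, so `E[δ (G(Ỹ) - 𝓕) | X̃, Z̃] = E[δ | X̃, Z̃] (E[G(Ỹ) | X̃, Z̃] - 𝓕) = 0` whatever `π̃` is.
Taking expectations gives the first identity; the second is the first plus `E[𝓕] = E[G(Ỹ)]`.
Conditional independence enters through the conditional expectation kernel: under it, `δ` and
`G(Ỹ)` are a.e. genuinely independent, which is checked on the countable π-system of rational
half-lines.
-/

namespace MeasureTheory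

theorem integral_mul_eq_zero_of_condExp_ae_eq_zero {Ω : Type*} {m' mΩ : MeasurableSpace Ω}
    (hm' : m' ≤ mΩ) {μ : Measure Ω} [SigmaFinite (μ.trim hm')] {p u : Ω → ℝ}
    (hp : StronglyMeasurable[m'] p) (hpui : Integrable (p * u) μ) (hui : Integrable u μ)
    (hu : μ[u | m'] =ᵐ[μ] 0) :
    ∫ ω, p ω * u ω ∂μ = 0 := by
  calc ∫ ω, p ω * u ω ∂μ = ∫ ω, μ[p * u | m'] ω ∂μ := (integral_condExp hm').symm
    _ = ∫ ω, p ω * μ[u | m'] ω ∂μ :=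
      integral_congr_ae (condExp_mul_of_stronglyMeasurable_left hp hpui hui)
    _ = 0 := integral_eq_zero_of_ae (by filter_upwards [hu] with ω hω; simp [hω])

end MeasureTheory

namespace ProbabilityTheory

theorem Kernel.IndepFun.ae_indepFun {α Ω : Type*} {mα : MeasurableSpace α}
    {mΩ : MeasurableSpace Ω} {κ : Kernel α Ω} [IsZeroOrMarkovKernel κ] {ν : Measure α}
    {f g : Ω → ℝ} (hf : Measurable f) (hg : Measurable g) (h : Kernel.IndepFun f g κ ν) :
    ∀ᵐ a ∂ν, ProbabilityTheory.IndepFun f g (κ a) := by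
  have h_Iic : ∀ᵐ a ∂ν, ∀ q r : ℚ, κ a (f ⁻¹' Set.Iic (q : ℝ) ∩ g ⁻¹' Set.Iic (r : ℝ))
      = κ a (f ⁻¹' Set.Iic (q : ℝ)) * κ a (g ⁻¹' Set.Iic (r : ℝ)) := by
    simp only [ae_all_iff]
    exact fun q r ↦ (Kernel.indepFun_iff_measure_inter_preimage_eq_mul.1 h) _ _
      measurableSet_Iic measurableSet_Iic
  filter_upwards [h_Iic] with a ha
  have h_gen (φ : Ω → ℝ) : MeasurableSpace.comap φ Real.measurableSpace =
      MeasurableSpace.generateFrom ((φ ⁻¹' ·) '' ⋃ q : ℚ, {Set.Iic (q : ℝ)}) := by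
    rw [← MeasurableSpace.comap_generateFrom, ← Real.borel_eq_generateFrom_Iic_rat,
      ← BorelSpace.measurable_eq]
  refine ProbabilityTheory.IndepSets.indep hf.comap_le hg.comap_le
    (Real.isPiSystem_Iic_rat.comap f) (Real.isPiSystem_Iic_rat.comap g) (h_gen f) (h_gen g) ?_
  rintro _ _ ⟨_, hs, rfl⟩ ⟨_, ht, rfl⟩
  simp only [Set.mem_iUnion, Set.mem_singleton_iff] at hs ht
  obtain ⟨q, rfl⟩ := hs
  obtain ⟨r, rfl⟩ := ht
  exact ae_of_all _ fun _ ↦ ha q r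

section

variable {Ω : Type*} {m' mΩ : MeasurableSpace Ω} [StandardBorelSpace Ω] {hm' : m' ≤ mΩ}
  {μ : Measure Ω} [IsFiniteMeasure μ]

theorem CondIndepFun.condExp_mul_ae_eq {f g : Ω → ℝ} (h : CondIndepFun m' hm' f g μ)
    (hf : Measurable f) (hg : Measurable g) (hfi : Integrable f μ) (hgi : Integrable g μ)
    (hfgi : Integrable (f * g) μ) :
    μ[f * g | m'] =ᵐ[μ] μ[f | m'] * μ[g | m'] := by
  have h_indep : ∀ᵐ ω ∂μ, IndepFun f g (condExpKernel μ m' ω) :=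
    ae_of_ae_trim hm' (Kernel.IndepFun.ae_indepFun hf hg h)
  filter_upwards [h_indep, condExp_ae_eq_integral_condExpKernel hm' hfgi,
    condExp_ae_eq_integral_condExpKernel hm' hfi, condExp_ae_eq_integral_condExpKernel hm' hgi]
    with ω hω hfg_eq hf_eq hg_eq
  rw [Pi.mul_apply, hfg_eq, hf_eq, hg_eq]
  exact hω.integral_mul_eq_mul_integral hf.aestronglyMeasurable hg.aestronglyMeasurable

theorem CondIndepFun.condExp_mul_sub_condExp_ae_eq_zero {δ g : Ω → ℝ} {C : ℝ}
    (h : CondIndepFun m' hm' δ g μ) (hδ : Measurable δ) (hδ_bdd : ∀ᵐ ω ∂μ, ‖δ ω‖ ≤ C)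
    (hg : Measurable g) (hgi : Integrable g μ) :
    μ[δ * (g - μ[g | m']) | m'] =ᵐ[μ] 0 := by
  have hδi : Integrable δ μ := .of_bound hδ.aestronglyMeasurable C hδ_bdd
  have hδgi : Integrable (δ * g) μ := hgi.bdd_mul hδ.aestronglyMeasurable hδ_bdd
  have hδEgi : Integrable (δ * μ[g | m']) μ :=
    integrable_condExp.bdd_mul hδ.aestronglyMeasurable hδ_bdd
  have h_pull : μ[δ * μ[g | m'] | m'] =ᵐ[μ] μ[δ | m'] * μ[g | m'] :=
    condExp_mul_of_stronglyMeasurable_right stronglyMeasurable_condExp hδEgi hδi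
  filter_upwards [mul_sub δ g (μ[g | m']) ▸ condExp_sub hδgi hδEgi m',
    h.condExp_mul_ae_eq hδ hg hδi hgi hδgi, h_pull] with ω h_sub h_mul h_pull
  simp only [h_sub, Pi.sub_apply, h_mul, h_pull, sub_self, Pi.zero_apply]

theorem CondIndepFun.integral_mul_mul_sub_condExp_eq_zero {δ g p : Ω → ℝ} {C : ℝ}
    (h : CondIndepFun m' hm' δ g μ) (hδ : Measurable δ) (hδ_bdd : ∀ᵐ ω ∂μ, ‖δ ω‖ ≤ C)
    (hg : Measurable g) (hgi : Integrable g μ)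
    (hp : StronglyMeasurable[m'] p) (hi : Integrable (p * (δ * (g - μ[g | m']))) μ) :
    ∫ ω, p ω * (δ ω * (g ω - μ[g | m'] ω)) ∂μ = 0 :=
  integral_mul_eq_zero_of_condExp_ae_eq_zero hm' hp hi
    ((hgi.sub integrable_condExp).bdd_mul hδ.aestronglyMeasurable hδ_bdd)
    (h.condExp_mul_sub_condExp_ae_eq_zero hδ hδ_bdd hg hgi)

end

end ProbabilityTheory

theorem stmt7_general {Ω α β γ : Type*} [MeasurableSpace Ω] [StandardBorelSpace Ω]
    [MeasurableSpace α] [MeasurableSpace β] [MeasurableSpace γ]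
    (μ : Measure Ω) [IsProbabilityMeasure μ]
    (Y : Ω → γ) (X : Ω → α) (Z : Ω → β)
    (hY : Measurable Y)
    (δ : Ω → ℝ) (hδ : Measurable δ) (hδ01 : ∀ ω, δ ω = 0 ∨ δ ω = 1)
    (G : γ → ℝ) (hG : Measurable G) (hGint : Integrable (fun ω => G (Y ω)) μ)
    (πt : α × β → ℝ) (hπt : Measurable πt)
    (hle : MeasurableSpace.comap (fun ω => (X ω, Z ω)) inferInstance ≤ ‹MeasurableSpace Ω›)
    (hCI : CondIndepFun (MeasurableSpace.comap (fun ω => (X ω, Z ω)) inferInstance) hle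
      δ (fun ω => G (Y ω)) μ)
    (F : α × β → ℝ)
    (hFcond : (fun ω => F (X ω, Z ω)) =ᵐ[μ]
      μ[(fun ω => G (Y ω)) | MeasurableSpace.comap (fun ω => (X ω, Z ω)) inferInstance])
    (hint1 : Integrable (fun ω => (δ ω / πt (X ω, Z ω)) * (G (Y ω) - F (X ω, Z ω))) μ) :
    (∫ ω, (δ ω / πt (X ω, Z ω)) * (G (Y ω) - F (X ω, Z ω)) ∂μ = 0) ∧
    (∫ ω, ((δ ω / πt (X ω, Z ω)) * G (Y ω)
        + (1 - δ ω / πt (X ω, Z ω)) * F (X ω, Z ω)) ∂μ = ∫ ω, G (Y ω) ∂μ) := by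
  set m' := MeasurableSpace.comap (fun ω => (X ω, Z ω)) inferInstance
  have h_weight : StronglyMeasurable[m'] fun ω => (πt (X ω, Z ω))⁻¹ :=
    (hπt.comp (comap_measurable _)).inv.stronglyMeasurable
  have hδ_bdd : ∀ᵐ ω ∂μ, ‖δ ω‖ ≤ 1 :=
    ae_of_all _ fun ω => by rcases hδ01 ω with h | h <;> simp [h]
  have h_residual : (fun ω => δ ω / πt (X ω, Z ω) * (G (Y ω) - F (X ω, Z ω))) =ᵐ[μ]
      fun ω => (πt (X ω, Z ω))⁻¹ * (δ ω * (G (Y ω) - μ[fun ω => G (Y ω) | m'] ω)) := by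
    filter_upwards [hFcond] with ω hω
    rw [hω, div_eq_mul_inv]
    ring
  have h_zero : ∫ ω, δ ω / πt (X ω, Z ω) * (G (Y ω) - F (X ω, Z ω)) ∂μ = 0 := by
    rw [integral_congr_ae h_residual]
    exact hCI.integral_mul_mul_sub_condExp_eq_zero hδ hδ_bdd (hG.comp hY) hGint h_weight
      ((integrable_congr h_residual).1 hint1)
  have hFi : Integrable (fun ω => F (X ω, Z ω)) μ := integrable_condExp.congr hFcond.symm
  refine ⟨h_zero, ?_⟩
  calc ∫ ω, (δ ω / πt (X ω, Z ω) * G (Y ω) + (1 - δ ω / πt (X ω, Z ω)) * F (X ω, Z ω)) ∂μ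
      = ∫ ω, (δ ω / πt (X ω, Z ω) * (G (Y ω) - F (X ω, Z ω)) + F (X ω, Z ω)) ∂μ := by
        congr 1 with ω
        ring
    _ = ∫ ω, F (X ω, Z ω) ∂μ := by rw [integral_add hint1 hFi, h_zero, zero_add]
    _ = ∫ ω, G (Y ω) ∂μ := by rw [integral_congr_ae hFcond, integral_condExp hle]

/-- Double robustness, part 1 (correct outcome model): with a possibly misspecified
propensity π̃ ∈ (0,1] but correct conditional mean 𝓕(X̃,Z̃) = E[G(Ỹ)|X̃,Z̃], and δ
conditionally independent of Ỹ given (X̃,Z̃),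
E[(δ/π̃)(G(Ỹ) - 𝓕(X̃,Z̃))] = 0 and E[(δ/π̃)G(Ỹ) + (1 - δ/π̃)𝓕(X̃,Z̃)] = E[G(Ỹ)]. -/
theorem stmt7 {Ω α β γ : Type*} [MeasurableSpace Ω] [StandardBorelSpace Ω] [Nonempty Ω]
    [MeasurableSpace α] [MeasurableSpace β] [MeasurableSpace γ]
    (μ : Measure Ω) [IsProbabilityMeasure μ]
    (Y : Ω → γ) (X : Ω → α) (Z : Ω → β)
    (hY : Measurable Y) (hX : Measurable X) (hZ : Measurable Z)
    (δ : Ω → ℝ) (hδ : Measurable δ) (hδ01 : ∀ ω, δ ω = 0 ∨ δ ω = 1)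
    (G : γ → ℝ) (hG : Measurable G) (hGint : Integrable (fun ω => G (Y ω)) μ)
    (πt : α × β → ℝ) (hπt : Measurable πt)
    (hπt01 : ∀ p, πt p ∈ Set.Ioc (0 : ℝ) 1)
    (hle : MeasurableSpace.comap (fun ω => (X ω, Z ω)) inferInstance ≤ ‹MeasurableSpace Ω›)
    (hCI : CondIndepFun (MeasurableSpace.comap (fun ω => (X ω, Z ω)) inferInstance) hle
      δ (fun ω => G (Y ω)) μ)
    (F : α × β → ℝ) (hF : Measurable F)
    (hFcond : (fun ω => F (X ω, Z ω)) =ᵐ[μ]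
      μ[(fun ω => G (Y ω)) | MeasurableSpace.comap (fun ω => (X ω, Z ω)) inferInstance])
    (hint1 : Integrable (fun ω => (δ ω / πt (X ω, Z ω)) * (G (Y ω) - F (X ω, Z ω))) μ)
    (hint2 : Integrable (fun ω =>
      (δ ω / πt (X ω, Z ω)) * G (Y ω) + (1 - δ ω / πt (X ω, Z ω)) * F (X ω, Z ω)) μ) :
    (∫ ω, (δ ω / πt (X ω, Z ω)) * (G (Y ω) - F (X ω, Z ω)) ∂μ = 0) ∧
    (∫ ω, ((δ ω / πt (X ω, Z ω)) * G (Y ω)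
        + (1 - δ ω / πt (X ω, Z ω)) * F (X ω, Z ω)) ∂μ = ∫ ω, G (Y ω) ∂μ) :=
  stmt7_general μ Y X Z hY δ hδ hδ01 G hG hGint πt hπt hle hCI F hFcond hint1
end

section
/- Double robustness, part 2 (correct propensity model): If δ ∈ {0,1} with E[δ | Ỹ, X̃, Z̃] = π(X̃, Z̃) > 0 a.s., G(Ỹ) is integrable, and 𝓕̃(X̃,Z̃) is any integrable measurable function (possibly a misspecified conditional mean), then E[ (δ/π) G(Ỹ) + (1 - δ/π) 𝓕̃(X̃,Z̃) ] = E[G(Ỹ)]. -/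
/-!
Write `w = (G - 𝓕̃) / π`, a function of `(Ỹ, X̃, Z̃)`. The estimator is `𝓕̃ + w δ`, and pulling `w`
out of the conditional expectation gives `E[w δ] = E[w E[δ | Ỹ, X̃, Z̃]] = E[w π] = E[G - 𝓕̃]`,
whatever `𝓕̃` is.
-/

open MeasureTheory

namespace MeasureTheory

variable {Ω : Type*} {m m0 : MeasurableSpace Ω} {μ : Measure[m0] Ω}

/-- Mathlib sets `μ[f | m] = 0` for non-integrable `f`, so a positive conditional expectation
certifies integrability. -/
theorem integrable_of_ae_condExp_pos [NeZero μ] {f : Ω → ℝ} (h : ∀ᵐ ω ∂μ, 0 < μ[f | m] ω) :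
    Integrable f μ := by
  by_contra hf
  simp only [condExp_of_not_integrable hf, Pi.zero_apply, lt_self_iff_false,
    Filter.eventually_false_iff_eq_bot, ae_eq_bot] at h
  exact NeZero.ne μ h

theorem integral_mul_condExp (hm : m ≤ m0) [SigmaFinite (μ.trim hm)] {f d : Ω → ℝ}
    (hf : StronglyMeasurable[m] f) (hfd : Integrable (f * d) μ) (hd : Integrable d μ) :
    ∫ ω, (f * μ[d | m]) ω ∂μ = ∫ ω, (f * d) ω ∂μ := by
  rw [← integral_condExp hm (f := f * d)]
  exact integral_congr_ae (condExp_mul_of_stronglyMeasurable_left hf hfd hd).symm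

theorem integral_aipw_eq_of_condExp_eq (hm : m ≤ m0) [SigmaFinite (μ.trim hm)] [NeZero μ]
    {δ π G F : Ω → ℝ} (hπ : π =ᵐ[μ] μ[δ | m]) (hπpos : ∀ᵐ ω ∂μ, 0 < π ω)
    (hπm : StronglyMeasurable[m] π) (hGm : StronglyMeasurable[m] G)
    (hFm : StronglyMeasurable[m] F) (hGi : Integrable G μ) (hFi : Integrable F μ)
    (hint : Integrable (fun ω => δ ω / π ω * G ω + (1 - δ ω / π ω) * F ω) μ) :
    ∫ ω, (δ ω / π ω * G ω + (1 - δ ω / π ω) * F ω) ∂μ = ∫ ω, G ω ∂μ := by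
  have hδ : Integrable δ μ := integrable_of_ae_condExp_pos <| by
    filter_upwards [hπ, hπpos] with ω hω hωpos
    rwa [← hω]
  set w : Ω → ℝ := (G - F) / π
  have hsplit : (fun ω => δ ω / π ω * G ω + (1 - δ ω / π ω) * F ω) = F + w * δ := by
    funext ω
    simp only [Pi.add_apply, Pi.mul_apply, Pi.div_apply, Pi.sub_apply, w]
    ring
  have hwδ : Integrable (w * δ) μ := by
    simpa [hsplit] using hint.sub hFi
  have hwπ : ∫ ω, (w * μ[δ | m]) ω ∂μ = ∫ ω, (G ω - F ω) ∂μ := by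
    refine integral_congr_ae ?_
    filter_upwards [hπ, hπpos] with ω hω hωpos
    simp only [w, Pi.mul_apply, Pi.div_apply, Pi.sub_apply, ← hω,
      div_mul_cancel₀ _ hωpos.ne']
  rw [hsplit, integral_add' hFi hwδ, ← integral_mul_condExp hm ((hGm.sub hFm).div hπm) hwδ hδ,
    hwπ, integral_sub hGi hFi]
  ring

end MeasureTheory

theorem stmt8_general {Ω α β γ : Type*} [MeasurableSpace Ω] [MeasurableSpace α] [MeasurableSpace β]
    [MeasurableSpace γ]
    (μ : Measure Ω) [IsProbabilityMeasure μ]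
    (Y : Ω → γ) (X : Ω → α) (Z : Ω → β)
    (hY : Measurable Y) (hX : Measurable X) (hZ : Measurable Z)
    (δ : Ω → ℝ)
    (g : α × β → ℝ) (hg : Measurable g)
    (hMAR : (fun ω => g (X ω, Z ω)) =ᵐ[μ]
      μ[δ | MeasurableSpace.comap (fun ω => (Y ω, X ω, Z ω)) inferInstance])
    (hpos : ∀ᵐ ω ∂μ, 0 < g (X ω, Z ω))
    (G : γ → ℝ) (hG : Measurable G) (hGint : Integrable (fun ω => G (Y ω)) μ)
    (Ft : α × β → ℝ) (hFt : Measurable Ft)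
    (hFtint : Integrable (fun ω => Ft (X ω, Z ω)) μ)
    (hint : Integrable (fun ω =>
      (δ ω / g (X ω, Z ω)) * G (Y ω) + (1 - δ ω / g (X ω, Z ω)) * Ft (X ω, Z ω)) μ) :
    ∫ ω, ((δ ω / g (X ω, Z ω)) * G (Y ω)
        + (1 - δ ω / g (X ω, Z ω)) * Ft (X ω, Z ω)) ∂μ = ∫ ω, G (Y ω) ∂μ := by
  set T : Ω → γ × α × β := fun ω => (Y ω, X ω, Z ω)
  have hm : MeasurableSpace.comap T inferInstance ≤ ‹_› :=
    (hY.prodMk (hX.prodMk hZ)).comap_le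
  have hT {h : γ × α × β → ℝ} (hh : Measurable h) :
      StronglyMeasurable[MeasurableSpace.comap T inferInstance] (h ∘ T) :=
    (hh.comp (comap_measurable T)).stronglyMeasurable
  exact integral_aipw_eq_of_condExp_eq hm hMAR hpos (hT (hg.comp measurable_snd))
    (hT (hG.comp measurable_fst)) (hT (hFt.comp measurable_snd)) hGint hFtint hint

/-- Double robustness, part 2 (correct propensity model): if E[δ | Ỹ,X̃,Z̃] = π(X̃,Z̃) > 0
a.s. and 𝓕̃(X̃,Z̃) is any integrable (possibly misspecified) function, then
E[(δ/π)G(Ỹ) + (1 - δ/π)𝓕̃(X̃,Z̃)] = E[G(Ỹ)]. -/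
theorem stmt8 {Ω α β γ : Type*} [MeasurableSpace Ω] [MeasurableSpace α] [MeasurableSpace β]
    [MeasurableSpace γ]
    (μ : Measure Ω) [IsProbabilityMeasure μ]
    (Y : Ω → γ) (X : Ω → α) (Z : Ω → β)
    (hY : Measurable Y) (hX : Measurable X) (hZ : Measurable Z)
    (δ : Ω → ℝ) (hδ : Measurable δ) (hδ01 : ∀ ω, δ ω = 0 ∨ δ ω = 1)
    (g : α × β → ℝ) (hg : Measurable g)
    (hMAR : (fun ω => g (X ω, Z ω)) =ᵐ[μ]
      μ[δ | MeasurableSpace.comap (fun ω => (Y ω, X ω, Z ω)) inferInstance])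
    (hpos : ∀ᵐ ω ∂μ, 0 < g (X ω, Z ω))
    (G : γ → ℝ) (hG : Measurable G) (hGint : Integrable (fun ω => G (Y ω)) μ)
    (Ft : α × β → ℝ) (hFt : Measurable Ft)
    (hFtint : Integrable (fun ω => Ft (X ω, Z ω)) μ)
    (hint : Integrable (fun ω =>
      (δ ω / g (X ω, Z ω)) * G (Y ω) + (1 - δ ω / g (X ω, Z ω)) * Ft (X ω, Z ω)) μ) :
    ∫ ω, ((δ ω / g (X ω, Z ω)) * G (Y ω)
        + (1 - δ ω / g (X ω, Z ω)) * Ft (X ω, Z ω)) ∂μ = ∫ ω, G (Y ω) ∂μ :=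
  stmt8_general μ Y X Z hY hX hZ δ g hg hMAR hpos G hG hGint Ft hFt hFtint hint
end
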